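/- (Memory lower bound, unrestricted case.) Fix a horizon H and a time t ≤ H. Let Z_1, …, Z_{t-1} and X_t, A_t be random variables on a common probability space, each taking values in a finite set, where Z_j takes values in a finite set 𝒵 and the pair at time t satisfies: there exist K ∈ ℕ, a memory function g : {1,…,H} × 𝒵 × {1,…,K} → {1,…,K}, and memory-state random variables defined recursively by Y_0 = 1 and Y_j = g(j, Z_j, Y_{j-1}) for 1 ≤ j ≤ t-1, such that the conditional distribution of A_t given (X_t, Z_{1:t-1}) coincides almost surely with the conditional distribution of A_t given (X_t, Y_{t-1}). Then for every k < t: I(A_t; Z_{1:k} | X_t, Z_{k+1:t-1}) ≤ log K. -/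

import Mathlib

open MeasureTheory ProbabilityTheory Real BigOperators

namespace MemoryLens

/-- Probability of an event as a real number. -/
noncomputable def pr {Ω : Type*} [MeasurableSpace Ω] (μ : Measure Ω) (s : Set Ω) : ℝ :=
  (μ s).toReal

/-- Conditional probability `P(s | t)` as a real number. -/
noncomputable def condProb {Ω : Type*} [MeasurableSpace Ω] (μ : Measure Ω) (s t : Set Ω) : ℝ :=
  pr μ (s ∩ t) / pr μ t

/-- Shannon entropy (in nats) of a finite-valued random variable. -/
noncomputable def entropy {Ω S : Type*} [MeasurableSpace Ω] [Fintype S]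
    (μ : Measure Ω) (X : Ω → S) : ℝ :=
  ∑ x : S, Real.negMulLog (pr μ {ω | X ω = x})

/-- Conditional entropy `H(X | W)` of finite-valued random variables. -/
noncomputable def condEntropy {Ω S T : Type*} [MeasurableSpace Ω] [Fintype S] [Fintype T]
    (μ : Measure Ω) (X : Ω → S) (W : Ω → T) : ℝ :=
  entropy μ (fun ω => (X ω, W ω)) - entropy μ W

/-- Conditional mutual information `I(A ; B | W)` of finite-valued random variables,
defined via the standard entropy decomposition. -/
noncomputable def condMI {Ω α β γ : Type*} [MeasurableSpace Ω] [Fintype α] [Fintype β] [Fintype γ]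
    (μ : Measure Ω) (A : Ω → α) (B : Ω → β) (W : Ω → γ) : ℝ :=
  entropy μ (fun ω => (A ω, W ω)) + entropy μ (fun ω => (B ω, W ω))
    - entropy μ (fun ω => (A ω, B ω, W ω)) - entropy μ W

/-- All fibers (level sets) of a random variable are measurable. -/
def MeasFibers {Ω α : Type*} [MeasurableSpace Ω] (A : Ω → α) : Prop :=
  ∀ a, MeasurableSet {ω | A ω = a}

/-- `memFold g y0 n (z_1, …, z_n)` is the memory state `Y_n` obtained by starting in `y0`
and applying the memory function `g` along observations `z_1, …, z_n`. -/
def memFold {𝒵 M : Type*} (g : ℕ → 𝒵 → M → M) (y0 : M) : (n : ℕ) → (Fin n → 𝒵) → M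
  | 0, _ => y0
  | n + 1, zs => g (n + 1) (zs (Fin.last n)) (memFold g y0 n (fun j => zs j.castSucc))

/-- The memory state `Y_n` as a random variable: the result of recursively updating the memory
via `g` along the observations `Z_1, …, Z_n`, starting from `Y_0 = y0`. -/
def memState {Ω 𝒵 M : Type*} (g : ℕ → 𝒵 → M → M) (Z : ℕ → Ω → 𝒵) (y0 : M) (n : ℕ) (ω : Ω) : M :=
  memFold g y0 n (fun j => Z (1 + (j : ℕ)) ω)

end MemoryLens

/-!
Write `B = Z_{1:k}`, `W = (X_t, Z_{k+1:t-1})` and `Y = Y_{t-1}`. The memory state is a function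
of `(B, W)`, so the chain rule gives `I(A; B | W) = I(A; Y | W) + I(A; B | Y, W)`. The second term
vanishes because `A` sees the history only through `(X_t, Y)`, and the first is at most
`H(Y) ≤ log K`.
-/

namespace MemoryLens

open Finset

theorem sum_mul_neg_log_le_sum_mul_neg_log {ι : Type*} [Fintype ι] {p q : ι → ℝ}
    (hp : ∀ i, 0 ≤ p i) (hq : ∀ i, 0 ≤ q i) (hpq : ∀ i, 0 < p i → 0 < q i)
    (hsum : ∑ i, q i ≤ ∑ i, p i) :
    ∑ i, p i * -log (p i) ≤ ∑ i, p i * -log (q i) := by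
  have key : ∀ i, p i * -log (p i) ≤ p i * -log (q i) + (q i - p i) := by
    intro i
    rcases (hp i).eq_or_lt with h0 | hpos
    · simp [← h0, hq i]
    · have hqpos := hpq i hpos
      have hlog := log_le_sub_one_of_pos (div_pos hqpos hpos)
      rw [log_div hqpos.ne' hpos.ne'] at hlog
      have := mul_le_mul_of_nonneg_left hlog hpos.le
      rw [mul_sub_one, mul_div_cancel₀ _ hpos.ne'] at this
      linarith
  calc ∑ i, p i * -log (p i) ≤ ∑ i, (p i * -log (q i) + (q i - p i)) :=
        sum_le_sum fun i _ => key i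
    _ = ∑ i, p i * -log (q i) + (∑ i, q i - ∑ i, p i) := by
        rw [sum_add_distrib, sum_sub_distrib]
    _ ≤ ∑ i, p i * -log (q i) := by linarith

section Probability

variable {Ω : Type*} [MeasurableSpace Ω] (μ : Measure Ω)

theorem pr_nonneg (s : Set Ω) : 0 ≤ pr μ s := ENNReal.toReal_nonneg

theorem pr_mono [IsFiniteMeasure μ] {s t : Set Ω} (h : s ⊆ t) : pr μ s ≤ pr μ t :=
  ENNReal.toReal_mono (measure_ne_top μ t) (measure_mono h)

theorem pr_inter_eq_mul_of_condProb_eq [IsFiniteMeasure μ] {s t : Set Ω} {c : ℝ}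
    (h : μ t ≠ 0 → condProb μ s t = c) : pr μ (s ∩ t) = c * pr μ t := by
  by_cases ht : μ t = 0
  · simp [pr, ht, measure_mono_null Set.inter_subset_right ht]
  · have hpos : pr μ t ≠ 0 := ENNReal.toReal_ne_zero.2 ⟨ht, measure_ne_top μ t⟩
    rw [← h ht, condProb, div_mul_cancel₀ _ hpos]

variable {S T : Type*}

theorem MeasFibers.comp [Countable S] {V : Ω → S} (hV : MeasFibers V) (f : S → T) :
    MeasFibers (fun ω => f (V ω)) := fun t => by
  have : {ω | f (V ω) = t} = ⋃ (s) (_ : f s = t), {ω | V ω = s} := by ext; simp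
  rw [this]
  exact MeasurableSet.iUnion fun s => MeasurableSet.iUnion fun _ => hV s

theorem MeasFibers.prodMk {U : Ω → S} {V : Ω → T} (hU : MeasFibers U) (hV : MeasFibers V) :
    MeasFibers (fun ω => (U ω, V ω)) := fun ⟨s, t⟩ => by
  simpa only [Prod.mk.injEq, Set.ofPred_and] using (hU s).inter (hV t)

theorem pr_comp_eq_sum [IsFiniteMeasure μ] [Fintype S] [DecidableEq T] {V : Ω → S}
    (hV : MeasFibers V) (f : S → T) (t : T) :
    pr μ {ω | f (V ω) = t} = ∑ s with f s = t, pr μ {ω | V ω = s} := by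
  have : {ω | f (V ω) = t} = V ⁻¹' ↑({s | f s = t} : Finset S) := by ext; simp
  rw [pr, this, ← sum_measure_preimage_singleton _ fun s _ => hV s,
    ENNReal.toReal_sum fun s _ => measure_ne_top μ _]
  rfl

theorem sum_pr_and [IsFiniteMeasure μ] [Fintype S] {V : Ω → S} (hV : MeasFibers V)
    (E : Set Ω) :
    ∑ s, pr μ {ω | V ω = s ∧ ω ∈ E} = pr μ E := by
  have := sum_measure_preimage_singleton (μ := μ.restrict E) univ fun s _ => hV s
  simp only [coe_univ, Set.preimage_univ, Measure.restrict_apply_univ] at this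
  rw [pr, ← this, ENNReal.toReal_sum fun s _ => measure_ne_top _ _]
  refine sum_congr rfl fun s _ => ?_
  rw [Measure.restrict_apply (t := V ⁻¹' {s}) (hV s)]
  rfl

theorem sum_pr_eq_one [IsProbabilityMeasure μ] [Fintype S] {V : Ω → S} (hV : MeasFibers V) :
    ∑ s, pr μ {ω | V ω = s} = 1 := by
  simpa [pr] using sum_pr_and μ hV Set.univ

theorem entropy_eq_sum [Fintype S] (V : Ω → S) :
    entropy μ V = ∑ s, pr μ {ω | V ω = s} * -log (pr μ {ω | V ω = s}) := by
  simp [entropy, negMulLog]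

theorem entropy_comp_eq_sum [IsFiniteMeasure μ] [Fintype S] [Fintype T] {V : Ω → S}
    (hV : MeasFibers V) (f : S → T) :
    entropy μ (fun ω => f (V ω))
      = ∑ s, pr μ {ω | V ω = s} * -log (pr μ {ω | f (V ω) = f s}) := by
  classical
  have hfiber : ∀ t, ∑ s with f s = t, pr μ {ω | V ω = s} * -log (pr μ {ω | f (V ω) = f s})
      = pr μ {ω | f (V ω) = t} * -log (pr μ {ω | f (V ω) = t}) := fun t => by
    calc _ = ∑ s with f s = t, pr μ {ω | V ω = s} * -log (pr μ {ω | f (V ω) = t}) :=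
          sum_congr rfl fun s hs => by rw [(mem_filter.1 hs).2]
      _ = _ := by rw [← sum_mul, pr_comp_eq_sum μ hV f t]
  rw [entropy_eq_sum, ← sum_fiberwise univ f]
  exact sum_congr rfl fun t _ => (hfiber t).symm

theorem entropy_comp_le [IsFiniteMeasure μ] [Fintype S] [Fintype T] {V : Ω → S}
    (hV : MeasFibers V) (f : S → T) :
    entropy μ (fun ω => f (V ω)) ≤ entropy μ V := by
  rw [entropy_comp_eq_sum μ hV f, entropy_eq_sum]
  refine sum_le_sum fun s _ => ?_
  rcases (pr_nonneg μ {ω | V ω = s}).eq_or_lt with h0 | hpos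
  · simp [← h0]
  · have hle : pr μ {ω | V ω = s} ≤ pr μ {ω | f (V ω) = f s} :=
      pr_mono μ fun ω h => congrArg f h
    exact mul_le_mul_of_nonneg_left (neg_le_neg (log_le_log hpos hle)) hpos.le

theorem entropy_comp_of_leftInverse [IsFiniteMeasure μ] [Fintype S] [Fintype T] {V : Ω → S}
    (hV : MeasFibers V) {f : S → T} {g : T → S} (hgf : Function.LeftInverse g f) :
    entropy μ (fun ω => f (V ω)) = entropy μ V := by
  refine le_antisymm (entropy_comp_le μ hV f) ?_
  calc entropy μ V = entropy μ (fun ω => g (f (V ω))) := by simp only [hgf _]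
    _ ≤ entropy μ (fun ω => f (V ω)) := entropy_comp_le μ (hV.comp f) g

theorem entropy_prodMk_le [IsProbabilityMeasure μ] [Fintype S] [Fintype T] {U : Ω → S}
    {V : Ω → T} (hU : MeasFibers U) (hV : MeasFibers V) :
    entropy μ (fun ω => (U ω, V ω)) ≤ entropy μ U + entropy μ V := by
  have hUV := hU.prodMk hV
  set p : S × T → ℝ := fun s => pr μ {ω | (U ω, V ω) = s}
  have hpU : ∀ s, p s ≤ pr μ {ω | U ω = s.1} := fun s => pr_mono μ fun ω h => congrArg Prod.fst h
  have hpV : ∀ s, p s ≤ pr μ {ω | V ω = s.2} := fun s => pr_mono μ fun ω h => congrArg Prod.snd h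
  have hsum : ∑ s : S × T, pr μ {ω | U ω = s.1} * pr μ {ω | V ω = s.2} = 1 := by
    simp only [Fintype.sum_prod_type, ← sum_mul_sum, sum_pr_eq_one μ hU, sum_pr_eq_one μ hV,
      one_mul]
  have hsplit : ∀ s, p s * -log (pr μ {ω | U ω = s.1} * pr μ {ω | V ω = s.2})
      = p s * -log (pr μ {ω | U ω = s.1}) + p s * -log (pr μ {ω | V ω = s.2}) := by
    intro s
    rcases (show 0 ≤ p s from pr_nonneg μ _).eq_or_lt with h0 | hpos
    · simp [← h0]
    · rw [log_mul (hpos.trans_le (hpU s)).ne' (hpos.trans_le (hpV s)).ne']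
      ring
  calc entropy μ (fun ω => (U ω, V ω)) = ∑ s, p s * -log (p s) := entropy_eq_sum μ _
    _ ≤ ∑ s, p s * -log (pr μ {ω | U ω = s.1} * pr μ {ω | V ω = s.2}) :=
        sum_mul_neg_log_le_sum_mul_neg_log (fun s => pr_nonneg μ _)
          (fun s => mul_nonneg (pr_nonneg μ _) (pr_nonneg μ _))
          (fun s hs => mul_pos (hs.trans_le (hpU s)) (hs.trans_le (hpV s)))
          (hsum.trans (sum_pr_eq_one μ hUV).symm).le
    _ = entropy μ U + entropy μ V := by
        rw [sum_congr rfl fun s _ => hsplit s, sum_add_distrib,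
          entropy_comp_eq_sum μ hUV Prod.fst, entropy_comp_eq_sum μ hUV Prod.snd]

theorem entropy_le_log_card [IsProbabilityMeasure μ] [Fintype S] {V : Ω → S}
    (hV : MeasFibers V) : entropy μ V ≤ log (Fintype.card S) := by
  obtain ⟨ω⟩ := nonempty_of_isProbabilityMeasure μ
  have hcard : (0 : ℝ) < Fintype.card S := Nat.cast_pos.2 (Fintype.card_pos_iff.2 ⟨V ω⟩)
  have hsum := sum_pr_eq_one μ hV
  calc entropy μ V = ∑ s, pr μ {ω | V ω = s} * -log (pr μ {ω | V ω = s}) := entropy_eq_sum μ V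
    _ ≤ ∑ s, pr μ {ω | V ω = s} * -log (Fintype.card S : ℝ)⁻¹ :=
        sum_mul_neg_log_le_sum_mul_neg_log (fun s => pr_nonneg μ _) (fun _ => by positivity)
          (fun _ _ => by positivity) (by simp [hsum, hcard.ne'])
    _ = log (Fintype.card S) := by rw [← sum_mul, hsum, log_inv, neg_neg, one_mul]

variable {α β γ δ : Type*} [Fintype α] [Fintype β] [Fintype γ] [Fintype δ]
  {A : Ω → α} {B : Ω → β} {W : Ω → γ}

theorem condMI_le_entropy [IsProbabilityMeasure μ] (hA : MeasFibers A) (hB : MeasFibers B)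
    (hW : MeasFibers W) : condMI μ A B W ≤ entropy μ B := by
  have hAW : entropy μ (fun ω => (A ω, W ω)) ≤ entropy μ (fun ω => (A ω, B ω, W ω)) :=
    entropy_comp_le μ (hA.prodMk (hB.prodMk hW)) fun s => (s.1, s.2.2)
  have hBW := entropy_prodMk_le μ hB hW
  rw [condMI]
  linarith

theorem condMI_eq_condMI_add_condMI [IsFiniteMeasure μ] (hA : MeasFibers A)
    (hB : MeasFibers B) (hW : MeasFibers W) {Y : Ω → δ} (F : β → γ → δ)
    (hY : ∀ ω, Y ω = F (B ω) (W ω)) :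
    condMI μ A B W = condMI μ A Y W + condMI μ A B (fun ω => (Y ω, W ω)) := by
  obtain rfl : Y = fun ω => F (B ω) (W ω) := funext hY
  have hBYW : entropy μ (fun ω => (B ω, F (B ω) (W ω), W ω)) = entropy μ (fun ω => (B ω, W ω)) :=
    entropy_comp_of_leftInverse μ (hB.prodMk hW) (f := fun s => (s.1, F s.1 s.2, s.2))
      (g := fun s => (s.1, s.2.2)) fun _ => rfl
  have hABYW : entropy μ (fun ω => (A ω, B ω, F (B ω) (W ω), W ω))
      = entropy μ (fun ω => (A ω, B ω, W ω)) :=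
    entropy_comp_of_leftInverse μ (hA.prodMk (hB.prodMk hW))
      (f := fun s => (s.1, s.2.1, F s.2.1 s.2.2, s.2.2)) (g := fun s => (s.1, s.2.1, s.2.2.2))
      fun _ => rfl
  simp only [condMI]
  linarith

theorem condMI_eq_sum [IsFiniteMeasure μ] (hA : MeasFibers A) (hB : MeasFibers B)
    (hW : MeasFibers W) :
    condMI μ A B W = ∑ s : α × β × γ, pr μ {ω | (A ω, B ω, W ω) = s} *
      (log (pr μ {ω | (A ω, B ω, W ω) = s}) + log (pr μ {ω | W ω = s.2.2})
        - log (pr μ {ω | (A ω, W ω) = (s.1, s.2.2)}) - log (pr μ {ω | (B ω, W ω) = s.2})) := by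
  have hABW := hA.prodMk (hB.prodMk hW)
  rw [condMI, entropy_comp_eq_sum μ hABW fun s => (s.1, s.2.2),
    entropy_comp_eq_sum μ hABW Prod.snd, entropy_eq_sum μ (fun ω => (A ω, B ω, W ω)),
    entropy_comp_eq_sum μ hABW fun s => s.2.2, ← sum_add_distrib, ← sum_sub_distrib,
    ← sum_sub_distrib]
  refine sum_congr rfl fun s _ => ?_
  ring

theorem condMI_eq_zero_of_factorization [IsFiniteMeasure μ] (hA : MeasFibers A)
    (hB : MeasFibers B) (hW : MeasFibers W) (q : α → γ → ℝ)
    (hq : ∀ a b w, pr μ {ω | A ω = a ∧ B ω = b ∧ W ω = w}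
      = q a w * pr μ {ω | B ω = b ∧ W ω = w}) :
    condMI μ A B W = 0 := by
  rw [condMI_eq_sum μ hA hB hW]
  refine sum_eq_zero fun ⟨a, b, w⟩ _ => ?_
  simp only [Prod.mk.injEq]
  have hAW : pr μ {ω | A ω = a ∧ W ω = w} = q a w * pr μ {ω | W ω = w} := by
    rw [← sum_pr_and μ hB, ← sum_pr_and μ hB, mul_sum]
    refine sum_congr rfl fun b _ => ?_
    simp only [Set.mem_ofPred_eq, and_left_comm (a := B _ = _), hq]
  rcases (pr_nonneg μ {ω | A ω = a ∧ B ω = b ∧ W ω = w}).eq_or_lt with h0 | hpos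
  · simp [← h0]
  · have hle {P : Ω → Prop} (hP : ∀ ω, A ω = a ∧ B ω = b ∧ W ω = w → P ω) :
        0 < pr μ {ω | P ω} :=
      hpos.trans_le (pr_mono μ hP)
    have hfactor : pr μ {ω | A ω = a ∧ B ω = b ∧ W ω = w} * pr μ {ω | W ω = w}
        = pr μ {ω | A ω = a ∧ W ω = w} * pr μ {ω | B ω = b ∧ W ω = w} := by
      rw [hq, hAW]
      ring
    have hlog := congrArg log hfactor
    rw [log_mul hpos.ne' (hle fun ω h => h.2.2).ne', log_mul (hle fun ω h => ⟨h.1, h.2.2⟩).ne'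
      (hle fun ω h => h.2).ne'] at hlog
    rw [hlog]
    ring

theorem condMI_le_entropy_of_condIndep [IsProbabilityMeasure μ] (hA : MeasFibers A)
    (hB : MeasFibers B) (hW : MeasFibers W) {Y : Ω → δ} (F : β → γ → δ)
    (hY : ∀ ω, Y ω = F (B ω) (W ω)) (q : α → δ × γ → ℝ)
    (hq : ∀ a b v, pr μ {ω | A ω = a ∧ B ω = b ∧ (Y ω, W ω) = v}
      = q a v * pr μ {ω | B ω = b ∧ (Y ω, W ω) = v}) :
    condMI μ A B W ≤ entropy μ Y := by
  have hYm : MeasFibers Y := by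
    rw [funext hY]
    exact (hB.prodMk hW).comp fun s => F s.1 s.2
  rw [condMI_eq_condMI_add_condMI μ hA hB hW F hY,
    condMI_eq_zero_of_factorization μ hA hB (hYm.prodMk hW) q hq, add_zero]
  exact condMI_le_entropy μ hA hYm hW

end Probability

section Memory

variable {Ω α γ 𝒵 M : Type*}

def obsBlock (Z : ℕ → Ω → 𝒵) (i n : ℕ) (ω : Ω) : Fin n → 𝒵 := fun j => Z (i + 1 + j) ω

theorem measFibers_obsBlock [MeasurableSpace Ω] {Z : ℕ → Ω → 𝒵} (hZ : ∀ i, MeasFibers (Z i))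
    (i n : ℕ) : MeasFibers (obsBlock Z i n) := fun zs => by
  have : {ω | obsBlock Z i n ω = zs} = ⋂ j : Fin n, {ω | Z (i + 1 + j) ω = zs j} := by
    ext; simp [obsBlock, funext_iff]
  rw [this]
  exact MeasurableSet.iInter fun j => hZ _ _

def splitEquiv {k n : ℕ} (h : k ≤ n) : (Fin k → 𝒵) × (Fin (n - k) → 𝒵) ≃ (Fin n → 𝒵) :=
  (Fin.appendEquiv k (n - k)).trans ((finCongr (Nat.add_sub_cancel' h)).arrowCongr (Equiv.refl 𝒵))

theorem splitEquiv_symm_obsBlock (Z : ℕ → Ω → 𝒵) {k n : ℕ} (h : k ≤ n) (ω : Ω) :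
    (splitEquiv h).symm (obsBlock Z 0 n ω) = (obsBlock Z 0 k ω, obsBlock Z k (n - k) ω) := by
  ext j <;> simp [splitEquiv, obsBlock, add_assoc, add_left_comm]

theorem memState_eq_memFold_splitEquiv (g : ℕ → 𝒵 → M → M) (Z : ℕ → Ω → 𝒵) (y0 : M)
    {k n : ℕ} (h : k ≤ n) (ω : Ω) :
    memState g Z y0 n ω
      = memFold g y0 n (splitEquiv h (obsBlock Z 0 k ω, obsBlock Z k (n - k) ω)) := by
  rw [← splitEquiv_symm_obsBlock Z h, Equiv.apply_symm_apply]
  rfl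

theorem pr_and_obsBlock_eq_mul [MeasurableSpace Ω] {μ : Measure Ω} [IsFiniteMeasure μ]
    {A : Ω → α} {X : Ω → γ} {Z : ℕ → Ω → 𝒵} {g : ℕ → 𝒵 → M → M} {y0 : M} {k n : ℕ}
    (h : k ≤ n)
    (hci : ∀ a x zs, μ {ω | X ω = x ∧ obsBlock Z 0 n ω = zs} ≠ 0 →
      condProb μ {ω | A ω = a} {ω | X ω = x ∧ obsBlock Z 0 n ω = zs}
        = condProb μ {ω | A ω = a} {ω | X ω = x ∧ memState g Z y0 n ω = memFold g y0 n zs})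
    (a : α) (b : Fin k → 𝒵) (v : M × γ × (Fin (n - k) → 𝒵)) :
    pr μ {ω | A ω = a ∧ obsBlock Z 0 k ω = b ∧
        (memState g Z y0 n ω, X ω, obsBlock Z k (n - k) ω) = v}
      = condProb μ {ω | A ω = a} {ω | X ω = v.2.1 ∧ memState g Z y0 n ω = v.1} *
        pr μ {ω | obsBlock Z 0 k ω = b ∧
          (memState g Z y0 n ω, X ω, obsBlock Z k (n - k) ω) = v} := by
  obtain ⟨y, x, s⟩ := v
  set zs := splitEquiv h (b, s)
  have hE : {ω | obsBlock Z 0 k ω = b ∧ (memState g Z y0 n ω, X ω, obsBlock Z k (n - k) ω)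
      = (y, x, s)} = {ω | X ω = x ∧ obsBlock Z 0 n ω = zs} ∩ {_ω | memFold g y0 n zs = y} := by
    ext ω
    have hsplit : obsBlock Z 0 n ω = zs ↔ obsBlock Z 0 k ω = b ∧ obsBlock Z k (n - k) ω = s := by
      rw [← Equiv.symm_apply_eq, splitEquiv_symm_obsBlock, Prod.mk.injEq]
    simp only [Set.mem_ofPred_eq, Set.mem_inter_iff, Prod.mk.injEq,
      memState_eq_memFold_splitEquiv g Z y0 h]
    constructor
    · rintro ⟨hb, hy, hx, hs⟩
      exact ⟨⟨hx, hsplit.2 ⟨hb, hs⟩⟩, by rwa [hb, hs] at hy⟩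
    · rintro ⟨⟨hx, hzs⟩, hy⟩
      obtain ⟨hb, hs⟩ := hsplit.1 hzs
      exact ⟨hb, by rwa [hb, hs], hx, hs⟩
  rw [Set.ofPred_and, hE]
  by_cases hy : memFold g y0 n zs = y
  · simp only [hy, Set.ofPred_true, Set.inter_univ]
    exact pr_inter_eq_mul_of_condProb_eq μ fun hne => hy ▸ hci a x zs hne
  · simp [hy, pr]

end Memory

end MemoryLens

theorem memory_lens_lower_bound_general
    {Ω α γ 𝒵 : Type*} [MeasurableSpace Ω]
    [Fintype α] [Fintype γ] [Fintype 𝒵]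
    (μ : MeasureTheory.Measure Ω) [MeasureTheory.IsProbabilityMeasure μ]
    (t : ℕ)
    (A : Ω → α) (X : Ω → γ) (Z : ℕ → Ω → 𝒵)
    (hA : MemoryLens.MeasFibers A) (hX : MemoryLens.MeasFibers X)
    (hZ : ∀ i, MemoryLens.MeasFibers (Z i))
    (K : ℕ) (hK : 0 < K) (g : ℕ → 𝒵 → Fin K → Fin K)
    (hci : ∀ (a : α) (x : γ) (zs : Fin (t - 1) → 𝒵),
      μ {ω | X ω = x ∧ (fun j : Fin (t - 1) => Z (1 + (j : ℕ)) ω) = zs} ≠ 0 →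
      MemoryLens.condProb μ {ω | A ω = a}
          {ω | X ω = x ∧ (fun j : Fin (t - 1) => Z (1 + (j : ℕ)) ω) = zs}
        = MemoryLens.condProb μ {ω | A ω = a}
          {ω | X ω = x ∧
            MemoryLens.memState g Z ⟨0, hK⟩ (t - 1) ω = MemoryLens.memFold g ⟨0, hK⟩ (t - 1) zs}) :
    ∀ k < t,
      MemoryLens.condMI μ A (fun ω => fun j : Fin k => Z (1 + (j : ℕ)) ω)
        (fun ω => (X ω, fun j : Fin (t - 1 - k) => Z (k + 1 + (j : ℕ)) ω))
      ≤ Real.log K := by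
  intro k hk
  have hkt : k ≤ t - 1 := by omega
  calc _ ≤ MemoryLens.entropy μ (MemoryLens.memState g Z ⟨0, hK⟩ (t - 1)) :=
        MemoryLens.condMI_le_entropy_of_condIndep μ hA (MemoryLens.measFibers_obsBlock hZ 0 k)
          (hX.prodMk (MemoryLens.measFibers_obsBlock hZ k (t - 1 - k)))
          (fun b w => MemoryLens.memFold g ⟨0, hK⟩ (t - 1) (MemoryLens.splitEquiv hkt (b, w.2)))
          (MemoryLens.memState_eq_memFold_splitEquiv g Z _ hkt) _
          (MemoryLens.pr_and_obsBlock_eq_mul hkt hci)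
    _ ≤ Real.log (Fintype.card (Fin K)) :=
        MemoryLens.entropy_le_log_card μ ((MemoryLens.measFibers_obsBlock hZ 0 (t - 1)).comp _)
    _ = Real.log K := by rw [Fintype.card_fin]

/-- memory lower bound, unrestricted case. If the agent's action `A_t` is
conditionally independent of the full history `Z_{1:t-1}` given `(X_t, Y_{t-1})`, where the
memory states satisfy `Y_0 = 1` and `Y_j = g(j, Z_j, Y_{j-1})` for a memory function
`g : {1,…,H} × 𝒵 × {1,…,K} → {1,…,K}`, then for every `k < t`:
`I(A_t; Z_{1:k} | X_t, Z_{k+1:t-1}) ≤ log K`. -/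
theorem memory_lens_lower_bound
    {Ω α γ 𝒵 : Type*} [MeasurableSpace Ω]
    [Fintype α] [Fintype γ] [Fintype 𝒵]
    (μ : MeasureTheory.Measure Ω) [MeasureTheory.IsProbabilityMeasure μ]
    (H t : ℕ) (ht : t ≤ H) (ht1 : 1 ≤ t)
    (A : Ω → α) (X : Ω → γ) (Z : ℕ → Ω → 𝒵)
    (hA : MemoryLens.MeasFibers A) (hX : MemoryLens.MeasFibers X)
    (hZ : ∀ i, MemoryLens.MeasFibers (Z i))
    (K : ℕ) (hK : 0 < K) (g : ℕ → 𝒵 → Fin K → Fin K)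
    (hci : ∀ (a : α) (x : γ) (zs : Fin (t - 1) → 𝒵),
      μ {ω | X ω = x ∧ (fun j : Fin (t - 1) => Z (1 + (j : ℕ)) ω) = zs} ≠ 0 →
      MemoryLens.condProb μ {ω | A ω = a}
          {ω | X ω = x ∧ (fun j : Fin (t - 1) => Z (1 + (j : ℕ)) ω) = zs}
        = MemoryLens.condProb μ {ω | A ω = a}
          {ω | X ω = x ∧
            MemoryLens.memState g Z ⟨0, hK⟩ (t - 1) ω = MemoryLens.memFold g ⟨0, hK⟩ (t - 1) zs}) :
    ∀ k < t,
      MemoryLens.condMI μ A (fun ω => fun j : Fin k => Z (1 + (j : ℕ)) ω)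
        (fun ω => (X ω, fun j : Fin (t - 1 - k) => Z (k + 1 + (j : ℕ)) ω))
      ≤ Real.log K :=
  memory_lens_lower_bound_general μ t A X Z hA hX hZ K hK g hci
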